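/- arXiv:2504.19777 — 2 statements merged into one kernel-verified Lean document; each statement's English description precedes it below -/
import Mathlib

section
/- Any isomorphism between two finite groups that are each direct products of non-Abelian simple groups maps each simple direct factor of the first group onto a simple direct factor of the second group. -/
open Subgroup

/-- A non-abelian simple normal subgroup of an internal direct product of simple groups
equals one of the factors. -/
lemma normal_simple_eq_factor {H : Type*} [Group H]
    {m : ℕ} (T : Fin m → Subgroup H)
    (hTnorm : ∀ j, (T j).Normal) (hTsimple : ∀ j, IsSimpleGroup ↥(T j))
    (hTsup : ⨆ j, T j = ⊤)
    (N : Subgroup H) (hN : N.Normal) (hNs : IsSimpleGroup ↥N)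
    (hNna : ¬ ∀ a b : ↥N, a * b = b * a) :
    ∃ j, N = T j := by
  have hNbot : N ≠ ⊥ := by
    rw [← Subgroup.nontrivial_iff_ne_bot]
    exact hNs.toNontrivial
  have hj : ∃ j, N ⊓ T j ≠ ⊥ := by
    by_contra h
    push_neg at h
    apply hNna
    intro a b
    have hb : (b : H) ∈ Subgroup.centralizer {(a : H)} := by
      have htop : (⊤ : Subgroup H) ≤ Subgroup.centralizer {(a : H)} := by
        rw [← hTsup]
        refine iSup_le fun j x hx => Subgroup.mem_centralizer_iff.mpr ?_
        rintro y rfl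
        exact Subgroup.commute_of_normal_of_disjoint N (T j) hN (hTnorm j)
          (disjoint_iff.mpr (h j)) _ x a.2 hx
      exact htop (Subgroup.mem_top _)
    have := Subgroup.mem_centralizer_iff.mp hb (a : H) rfl
    exact Subtype.ext this
  obtain ⟨j, hjne⟩ := hj
  have hinfnorm : (N ⊓ T j).Normal :=
    ⟨fun x hx g => ⟨hN.conj_mem x hx.1 g, (hTnorm j).conj_mem x hx.2 g⟩⟩
  -- N ⊓ T j as a subgroup of N is normal, hence ⊥ or ⊤; it isn't ⊥, so N ≤ T j.
  haveI := hNs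
  have hsub1 := hinfnorm.subgroupOf N
  have hNle : N ≤ T j := by
    rcases hsub1.eq_bot_or_eq_top with hb | ht
    · exact absurd ((Subgroup.subgroupOf_eq_bot.mp hb).eq_bot_of_le inf_le_left) hjne
    · exact le_trans (Subgroup.subgroupOf_eq_top.mp ht) inf_le_right
  -- N as a subgroup of T j is normal, hence ⊥ or ⊤; it isn't ⊥, so T j ≤ N.
  haveI := hTsimple j
  have hsub2 := hN.subgroupOf (T j)
  rcases hsub2.eq_bot_or_eq_top with hb | ht
  · exact absurd ((Subgroup.subgroupOf_eq_bot.mp hb).eq_bot_of_le hNle) hNbot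
  · exact ⟨j, le_antisymm hNle (Subgroup.subgroupOf_eq_top.mp ht)⟩


/-- An isomorphism maps each simple non-abelian normal factor into a factor. -/
lemma iso_maps_factor {G H : Type*} [Group G] [Group H]
    {k m : ℕ} (S : Fin k → Subgroup G) (T : Fin m → Subgroup H)
    (hSnorm : ∀ i, (S i).Normal) (hSsimple : ∀ i, IsSimpleGroup ↥(S i))
    (hSna : ∀ i, ¬ ∀ a b : ↥(S i), a * b = b * a)
    (hTnorm : ∀ j, (T j).Normal) (hTsimple : ∀ j, IsSimpleGroup ↥(T j))
    (hTsup : ⨆ j, T j = ⊤)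
    (φ : G ≃* H) (i : Fin k) :
    ∃ j, Subgroup.map φ.toMonoidHom (S i) = T j := by
  set N := Subgroup.map φ.toMonoidHom (S i) with hNdef
  have e : ↥(S i) ≃* ↥N := φ.subgroupMap (S i)
  haveI := hSsimple i
  haveI : Nontrivial ↥N := e.symm.toEquiv.nontrivial
  have hNnorm : N.Normal := (hSnorm i).map φ.toMonoidHom φ.surjective
  have hNs : IsSimpleGroup ↥N :=
    IsSimpleGroup.isSimpleGroup_of_surjective e.toMonoidHom e.surjective
  have hNna : ¬ ∀ a b : ↥N, a * b = b * a := by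
    intro hc
    apply hSna i
    intro a b
    have : e (a * b) = e (b * a) := by
      rw [map_mul, map_mul, hc]
    exact e.injective this
  exact normal_simple_eq_factor T hTnorm hTsimple hTsup N hNnorm hNs hNna

/-- Any isomorphism between two finite groups that are each internal direct products of
non-Abelian simple groups maps each simple direct factor of the first group onto a simple
direct factor of the second; in particular the numbers of factors agree. -/
theorem iso_maps_simple_factors_to_simple_factors
    (G H : Type*) [Group G] [Finite G] [Group H] [Finite H]
    (k m : ℕ) (S : Fin k → Subgroup G) (T : Fin m → Subgroup H)
    (hSnorm : ∀ i, (S i).Normal) (hSsimple : ∀ i, IsSimpleGroup ↥(S i))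
    (hSna : ∀ i, ¬ ∀ a b : ↥(S i), a * b = b * a)
    (hSind : iSupIndep S) (hSsup : ⨆ i, S i = ⊤)
    (hTnorm : ∀ j, (T j).Normal) (hTsimple : ∀ j, IsSimpleGroup ↥(T j))
    (hTna : ∀ j, ¬ ∀ a b : ↥(T j), a * b = b * a)
    (hTind : iSupIndep T) (hTsup : ⨆ j, T j = ⊤)
    (φ : G ≃* H) :
    k = m ∧ ∀ i, ∃ j, Subgroup.map φ.toMonoidHom (S i) = T j := by
  -- nontriviality of factors
  have hSne : ∀ i, S i ≠ ⊥ := fun i => by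
    rw [← Subgroup.nontrivial_iff_ne_bot]; exact (hSsimple i).toNontrivial
  have hTne : ∀ j, T j ≠ ⊥ := fun j => by
    rw [← Subgroup.nontrivial_iff_ne_bot]; exact (hTsimple j).toNontrivial
  -- forward map of indices
  have hf := iso_maps_factor S T hSnorm hSsimple hSna hTnorm hTsimple hTsup φ
  choose f hfspec using hf
  have hfinj : Function.Injective f := by
    intro i i' h
    by_contra hne
    have hmap : Subgroup.map φ.toMonoidHom (S i) = Subgroup.map φ.toMonoidHom (S i') := by
      rw [hfspec i, hfspec i', h]
    have hSS : S i = S i' := Subgroup.map_injective φ.injective hmap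
    have hle : S i ≤ ⨆ (j) (_ : j ≠ i), S j := by
      rw [hSS]
      exact le_iSup₂ (f := fun j (_ : j ≠ i) => S j) i' (Ne.symm hne)
    exact hSne i ((hSind i).eq_bot_of_le hle)
  -- backward map of indices
  have hg := iso_maps_factor T S hTnorm hTsimple hTna hSnorm hSsimple hSsup φ.symm
  choose g hgspec using hg
  have hginj : Function.Injective g := by
    intro j j' h
    by_contra hne
    have hmap : Subgroup.map φ.symm.toMonoidHom (T j) = Subgroup.map φ.symm.toMonoidHom (T j') := by
      rw [hgspec j, hgspec j', h]
    have hTT : T j = T j' := Subgroup.map_injective φ.symm.injective hmap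
    have hle : T j ≤ ⨆ (j'') (_ : j'' ≠ j), T j'' := by
      rw [hTT]
      exact le_iSup₂ (f := fun j'' (_ : j'' ≠ j) => T j'') j' (Ne.symm hne)
    exact hTne j ((hTind j).eq_bot_of_le hle)
  constructor
  · have h1 : k ≤ m := by
      simpa using Fintype.card_le_of_injective f hfinj
    have h2 : m ≤ k := by
      simpa using Fintype.card_le_of_injective g hginj
    omega
  · exact fun i => ⟨f i, hfspec i⟩
end

section
/- Let Ω be partitioned into blocks Ω₁, …, Ω_ℓ each of size k ≥ 5 with k ≠ 6, and let K ≤ ∏ᵢ Alt(Ω_i) be a subdirect product. Fix a bijection structure L ≤ ∏ᵢ Alt(Δ_i) similarly, and a permutation π ∈ S_ℓ. Then the number of bijections φ : Ω → Δ mapping Ω_i to Δ_{π(i)} with φ⁻¹ K φ = L is at most 2^ℓ · |K|. -/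
/-!
Fix one twisted equivalence `φ₀`. For any other one `φ`, the permutation `φ φ₀⁻¹` preserves every
block and normalizes the image of `K`, so it comes from an element of the normalizer `N` of `K` in
`∏ᵢ Sym(k)`; hence there are at most `|N|` twisted equivalences.

An element `ψ ∈ N` with all components even already lies in `K`. Peel off one block `i` of its
support at a time: the `i`-th components of the elements of `K` supported on the support of `ψ`
form a normal subgroup of the simple group `Alt(k)`. If it is all of `Alt(k)`, divide `ψ` by such an
element of `K`; if it is trivial, the commutators `[ψ, g]`, `g ∈ K`, show that `ψ i` centralizes
`Alt(k)`, so `ψ i = 1`. Thus `N ∩ ∏ᵢ Alt(k) = K`, a subgroup of index at most `2^ℓ` in `N`.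
-/

/-- The natural embedding of `∏ᵢ Sym(Ω_i)` into `Sym(⋃ᵢ Ω_i)`, where `Ω_i = {i} × Fin k`. -/
def blockEmbed (ℓ k : ℕ) : (Fin ℓ → Equiv.Perm (Fin k)) →* Equiv.Perm (Fin ℓ × Fin k) where
  toFun g := Equiv.prodCongrRight g
  map_one' := Equiv.ext fun p => rfl
  map_mul' _ _ := Equiv.ext fun p => rfl

namespace Subgroup

variable {G H : Type*} [Group G] [Group H]

theorem map_normalizer_eq_of_injective (K : Subgroup G) {f : G →* H}
    (hf : Function.Injective f) : (normalizer K).map f = normalizer (K.map f) ⊓ f.range := by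
  refine le_antisymm (le_inf (le_normalizer_map f) (map_le_range f _)) ?_
  rintro _ ⟨hx, g, rfl⟩
  refine ⟨g, ?_, rfl⟩
  rw [← comap_map_eq_self_of_injective hf K, ← comap_normalizer_eq_of_le_range (map_le_range f K)]
  exact hx

theorem mul_inv_mem_normalizer_of_map_conj_inv_eq {K M : Subgroup G} {a b : G}
    (ha : K.map (MulAut.conj a⁻¹).toMonoidHom = M) (hb : K.map (MulAut.conj b⁻¹).toMonoidHom = M) :
    a * b⁻¹ ∈ normalizer K := by
  have hconj : ∀ x y : G, (MulAut.conj (x * y) : G →* G) =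
      (MulAut.conj x).toMonoidHom.comp (MulAut.conj y).toMonoidHom := fun x y => by ext; simp
  rw [mem_normalizer_iff_map_conj_eq, hconj, ← map_map, hb, ← ha, map_map, ← hconj,
    mul_inv_cancel, map_one]
  exact map_id K

theorem card_le_index_mul_card_inf (K A : Subgroup G) (hA : A.index ≠ 0) :
    Nat.card K ≤ A.index * Nat.card ↥(K ⊓ A) := by
  have hcard : Nat.card (A.subgroupOf K) = Nat.card ↥(K ⊓ A) := by
    rw [← card_map_of_injective K.subtype_injective, subgroupOf_map_subtype, inf_comm]
  calc Nat.card K = A.relIndex K * Nat.card (A.subgroupOf K) := by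
        rw [relIndex, mul_comm, card_mul_index]
    _ ≤ A.index * Nat.card ↥(K ⊓ A) := by
        rw [hcard, ← relIndex_top_right]
        exact Nat.mul_le_mul_right _ (relIndex_le_of_le_right le_top (by rwa [relIndex_top_right]))

section Subdirect

variable {ι : Type*} {A : Subgroup G} {K : Subgroup (ι → G)}

def supportedProj (K : Subgroup (ι → G)) (s : Set ι) (i : ι) : Subgroup G :=
  (K ⊓ pi sᶜ fun _ => ⊥).map (Pi.evalMonoidHom (fun _ => G) i)

theorem mem_supportedProj {s : Set ι} {i : ι} {x : G} :
    x ∈ supportedProj K s i ↔ ∃ g ∈ K, (∀ j ∉ s, g j = 1) ∧ g i = x := by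
  simp [supportedProj, mem_pi, and_assoc]

theorem supportedProj_subgroupOf_normal (hKsub : ∀ i, ∀ a ∈ A, ∃ g ∈ K, g i = a)
    (s : Set ι) (i : ι) : ((supportedProj K s i).subgroupOf A).Normal := by
  refine ⟨fun x hx a => ?_⟩
  rw [mem_subgroupOf, mem_supportedProj] at hx ⊢
  obtain ⟨g, hg, hgs, hgi⟩ := hx
  obtain ⟨w, hw, hwi⟩ := hKsub i a a.2
  refine ⟨w * g * w⁻¹, mul_mem (mul_mem hw hg) (inv_mem hw), fun j hj => ?_, ?_⟩
  · simp [hgs j hj]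
  · simp [hgi, hwi]

theorem eq_one_of_supportedProj_eq_bot (hA : center A = ⊥) (hKA : ∀ g ∈ K, ∀ i, g i ∈ A)
    (hKsub : ∀ i, ∀ a ∈ A, ∃ g ∈ K, g i = a) {s : Set ι} {i : ι}
    (hbot : (supportedProj K s i).subgroupOf A = ⊥) {ψ : ι → G} (hψA : ∀ i, ψ i ∈ A)
    (hψs : ∀ j ∉ s, ψ j = 1) (hψ : ψ ∈ normalizer K) : ψ i = 1 := by
  suffices hcenter : (⟨ψ i, hψA i⟩ : A) ∈ center A by
    rw [hA, mem_bot] at hcenter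
    exact congrArg Subtype.val hcenter
  refine mem_center_iff.mpr fun a => Subtype.ext ?_
  obtain ⟨g, hg, hgi⟩ := hKsub i a a.2
  have hcomm : ψ * g * ψ⁻¹ * g⁻¹ ∈ K := mul_mem ((mem_normalizer_iff.mp hψ g).mp hg) (inv_mem hg)
  have hcommA : (ψ * g * ψ⁻¹ * g⁻¹) i ∈ A :=
    mul_mem (mul_mem (mul_mem (hψA i) (hKA g hg i)) (inv_mem (hψA i))) (inv_mem (hKA g hg i))
  have hmem : (⟨_, hcommA⟩ : A) ∈ (supportedProj K s i).subgroupOf A :=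
    mem_subgroupOf.mpr (mem_supportedProj.mpr ⟨_, hcomm, fun j hj => by simp [hψs j hj], rfl⟩)
  rw [hbot, mem_bot] at hmem
  have hcommi : ψ i * g i * (ψ i)⁻¹ * (g i)⁻¹ = 1 := by simpa using congrArg Subtype.val hmem
  have hswap := mul_inv_eq_iff_eq_mul.mp (mul_inv_eq_one.mp hcommi)
  simpa [← hgi] using hswap.symm

variable [IsSimpleGroup A]

theorem mem_of_mem_normalizer_of_support_subset (hA : center A = ⊥)
    (hKA : ∀ g ∈ K, ∀ i, g i ∈ A) (hKsub : ∀ i, ∀ a ∈ A, ∃ g ∈ K, g i = a) (s : Finset ι)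
    {ψ : ι → G} (hψA : ∀ i, ψ i ∈ A) (hψs : ∀ j ∉ s, ψ j = 1) (hψ : ψ ∈ normalizer K) :
    ψ ∈ K := by
  classical
  induction s using Finset.induction_on generalizing ψ with
  | empty =>
    obtain rfl : ψ = 1 := funext fun j => hψs j (Finset.notMem_empty j)
    exact one_mem K
  | insert i s hi ih =>
    have hψs' : ∀ j ∉ (↑(insert i s) : Set ι), ψ j = 1 := fun j hj => hψs j hj
    have := supportedProj_subgroupOf_normal hKsub (↑(insert i s) : Set ι) i
    rcases IsSimpleGroup.eq_bot_or_eq_top_of_normal _ this with hbot | htop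
    · have hψi := eq_one_of_supportedProj_eq_bot hA hKA hKsub hbot hψA hψs' hψ
      refine ih hψA (fun j hj => ?_) hψ
      by_cases hji : j = i
      · rwa [hji]
      · exact hψs j (by simp [hji, hj])
    · have hψi : (⟨ψ i, hψA i⟩ : A) ∈ (supportedProj K _ i).subgroupOf A := htop ▸ mem_top _
      obtain ⟨g, hg, hgs, hgi⟩ := mem_supportedProj.mp (mem_subgroupOf.mp hψi)
      suffices ψ * g⁻¹ ∈ K by simpa using mul_mem this hg
      refine ih (fun j => mul_mem (hψA j) (inv_mem (hKA g hg j))) (fun j hj => ?_)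
        (mul_mem hψ (inv_mem (le_normalizer hg)))
      by_cases hji : j = i
      · simp [hji, hgi]
      · have hj' : j ∉ (↑(insert i s) : Set ι) := by simp [hji, hj]
        simp [hψs j (by simpa using hj'), hgs j hj']

theorem normalizer_inf_pi_eq [Finite ι] (hA : center A = ⊥) (hKA : ∀ g ∈ K, ∀ i, g i ∈ A)
    (hKsub : ∀ i, ∀ a ∈ A, ∃ g ∈ K, g i = a) :
    normalizer K ⊓ pi Set.univ (fun _ => A) = K := by
  have := Fintype.ofFinite ι
  refine le_antisymm (fun ψ ⟨hψ, hψA⟩ => ?_) (le_inf le_normalizer fun g hg i _ => hKA g hg i)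
  exact mem_of_mem_normalizer_of_support_subset hA hKA hKsub Finset.univ (fun i => hψA i trivial)
    (fun j hj => absurd (Finset.mem_univ j) hj) hψ

end Subdirect

end Subgroup

open Equiv Subgroup

theorem card_normalizer_le_two_pow_mul_card {ι α : Type*} [Fintype ι] [Fintype α] [DecidableEq α]
    (hα : 5 ≤ Nat.card α) {K : Subgroup (ι → Perm α)}
    (hKalt : ∀ g ∈ K, ∀ i, g i ∈ alternatingGroup α)
    (hKsub : ∀ i, ∀ σ ∈ alternatingGroup α, ∃ g ∈ K, g i = σ) :
    Nat.card (normalizer (K : Set (ι → Perm α))) ≤ 2 ^ Fintype.card ι * Nat.card K := by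
  have := alternatingGroup.isSimpleGroup hα
  have : Nontrivial α := Finite.one_lt_card_iff_nontrivial.mp (by omega)
  have hindex : (pi Set.univ fun _ : ι => alternatingGroup α).index = 2 ^ Fintype.card ι := by
    simp [index_pi, alternatingGroup.index_eq_two]
  have hinf := normalizer_inf_pi_eq (alternatingGroup.center_eq_bot (by omega)) hKalt hKsub
  simpa [hindex, hinf] using card_le_index_mul_card_inf (normalizer (K : Set (ι → Perm α)))
    (pi Set.univ fun _ : ι => alternatingGroup α) (by simp [hindex])

theorem blockEmbed_injective (ℓ k : ℕ) : Function.Injective (blockEmbed ℓ k) := fun _ _ h =>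
  funext fun i => Equiv.ext fun x => congrArg Prod.snd (Equiv.congr_fun h (i, x))

theorem mem_range_blockEmbed_iff {ℓ k : ℕ} {ψ : Perm (Fin ℓ × Fin k)} :
    ψ ∈ (blockEmbed ℓ k).range ↔ ∀ p, (ψ p).1 = p.1 := by
  refine ⟨by rintro ⟨g, rfl⟩ p; rfl, fun h => ?_⟩
  refine ⟨fun i => Equiv.ofBijective (fun x => (ψ (i, x)).2)
      (Finite.injective_iff_bijective.mp fun x y hxy => ?_),
    Equiv.ext fun p => Prod.ext (h p).symm rfl⟩
  exact congrArg Prod.snd (ψ.injective (Prod.ext ((h (i, x)).trans (h (i, y)).symm) hxy))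

theorem card_twisted_equivalences_le_general
    (ℓ k : ℕ) (hk5 : 5 ≤ k)
    (K L : Subgroup (Fin ℓ → Equiv.Perm (Fin k)))
    (hKalt : ∀ g ∈ K, ∀ i, g i ∈ alternatingGroup (Fin k))
    (hKsub : ∀ (i : Fin ℓ), ∀ σ ∈ alternatingGroup (Fin k), ∃ g ∈ K, g i = σ)
    (π : Equiv.Perm (Fin ℓ)) :
    Nat.card {φ : Equiv.Perm (Fin ℓ × Fin k) //
        (∀ p : Fin ℓ × Fin k, (φ p).1 = π p.1) ∧
        Subgroup.map (MulAut.conj φ⁻¹).toMonoidHom (Subgroup.map (blockEmbed ℓ k) K) =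
          Subgroup.map (blockEmbed ℓ k) L} ≤
      2 ^ ℓ * Nat.card ↥K := by
  rcases isEmpty_or_nonempty {φ : Perm (Fin ℓ × Fin k) // (∀ p, (φ p).1 = π p.1) ∧
      (K.map (blockEmbed ℓ k)).map (MulAut.conj φ⁻¹).toMonoidHom = L.map (blockEmbed ℓ k)}
    with hempty | ⟨φ₀, hφ₀π, hφ₀L⟩
  · rw [Nat.card_of_isEmpty]
    exact Nat.zero_le _
  have hshift (φ : Perm (Fin ℓ × Fin k)) (hφπ : ∀ p, (φ p).1 = π p.1)
      (hφL : (K.map (blockEmbed ℓ k)).map (MulAut.conj φ⁻¹).toMonoidHom = L.map (blockEmbed ℓ k)) :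
      φ * φ₀⁻¹ ∈ (normalizer (K : Set (Fin ℓ → Perm (Fin k)))).map (blockEmbed ℓ k) := by
    rw [map_normalizer_eq_of_injective _ (blockEmbed_injective ℓ k)]
    refine ⟨mul_inv_mem_normalizer_of_map_conj_inv_eq hφL hφ₀L,
      mem_range_blockEmbed_iff.mpr fun p => ?_⟩
    rw [Perm.mul_apply, hφπ, ← hφ₀π]
    simp
  calc _ ≤ Nat.card ((normalizer (K : Set (Fin ℓ → Perm (Fin k)))).map (blockEmbed ℓ k)) :=
        Nat.card_le_card_of_injective (fun φ => ⟨φ.1 * φ₀⁻¹, hshift φ.1 φ.2.1 φ.2.2⟩)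
          fun φ ψ h => Subtype.ext (mul_right_cancel (congrArg Subtype.val h))
    _ = Nat.card (normalizer (K : Set (Fin ℓ → Perm (Fin k)))) :=
        card_map_of_injective (blockEmbed_injective ℓ k)
    _ ≤ 2 ^ ℓ * Nat.card K := by
        simpa using card_normalizer_le_two_pow_mul_card (by simpa using hk5) hKalt hKsub

/-- Let `Ω = Δ` be partitioned into `ℓ` blocks of size `k ≥ 5`, `k ≠ 6`, let
`K, L ≤ ∏ᵢ Alt(k)` be subdirect products, and fix `π ∈ S_ℓ`.  Then the number of
bijections `φ : Ω → Δ` mapping the `i`-th block to the `π(i)`-th block and conjugating `K`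
onto `L` is at most `2^ℓ · |K|`. -/
theorem card_twisted_equivalences_le
    (ℓ k : ℕ) (hk5 : 5 ≤ k) (hk6 : k ≠ 6)
    (K L : Subgroup (Fin ℓ → Equiv.Perm (Fin k)))
    (hKalt : ∀ g ∈ K, ∀ i, g i ∈ alternatingGroup (Fin k))
    (hLalt : ∀ g ∈ L, ∀ i, g i ∈ alternatingGroup (Fin k))
    (hKsub : ∀ (i : Fin ℓ), ∀ σ ∈ alternatingGroup (Fin k), ∃ g ∈ K, g i = σ)
    (hLsub : ∀ (i : Fin ℓ), ∀ σ ∈ alternatingGroup (Fin k), ∃ g ∈ L, g i = σ)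
    (π : Equiv.Perm (Fin ℓ)) :
    Nat.card {φ : Equiv.Perm (Fin ℓ × Fin k) //
        (∀ p : Fin ℓ × Fin k, (φ p).1 = π p.1) ∧
        Subgroup.map (MulAut.conj φ⁻¹).toMonoidHom (Subgroup.map (blockEmbed ℓ k) K) =
          Subgroup.map (blockEmbed ℓ k) L} ≤
      2 ^ ℓ * Nat.card ↥K :=
  card_twisted_equivalences_le_general ℓ k hk5 K L hKalt hKsub π
end
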